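/- arXiv:1412.5240 — 10 statements merged into one kernel-verified Lean document; each statement's English description precedes it below -/
import Mathlib

section
/- For all a > 0 and λ > 0, with t₁* = (3/2^{2/3})(λ a(a+1))^{1/3} − a and t₃* = √(2λ(a+1)) − a/2, the inequality t₁* ≤ t₃* holds, with equality if and only if λ = a²/(2(a+1)). -/
/-!
With `s = √(2λ(a+1))` we have `λ a (a+1) = s² a / 2`, so `t₁* + a = (3/2) s^{2/3} a^{1/3}` while
`t₃* + a = (3/2) ((2/3) s + (1/3) a)`. The inequality is therefore weighted AM-GM for `s, s, a`,
with equality iff `s = a`, i.e. `2λ(a+1) = a²`.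
-/

open Real

lemma three_div_two_rpow_two_thirds_mul_rpow_one_third {s a : ℝ} (hs : 0 ≤ s) (ha : 0 ≤ a) :
    3 / (2 : ℝ) ^ ((2 : ℝ) / 3) * (s ^ 2 * a / 2) ^ ((1 : ℝ) / 3) =
      3 / 2 * (s ^ ((2 : ℝ) / 3) * a ^ ((1 : ℝ) / 3)) := by
  have hsq : (s ^ 2) ^ ((1 : ℝ) / 3) = s ^ ((2 : ℝ) / 3) := by
    rw [← rpow_natCast, ← rpow_mul hs]
    norm_num
  have htwo : (2 : ℝ) ^ ((2 : ℝ) / 3) * (2 : ℝ) ^ ((1 : ℝ) / 3) = 2 := by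
    rw [← rpow_add two_pos]
    norm_num
  rw [div_rpow (by positivity) zero_le_two, mul_rpow (by positivity) ha, hsq]
  field_simp
  linear_combination (-(s ^ ((2 : ℝ) / 3) * a ^ ((1 : ℝ) / 3))) * htwo

lemma sqrt_two_mul_mul_add_one_eq_self_iff {a lam : ℝ} (ha : 0 < a) :
    √(2 * lam * (a + 1)) = a ↔ lam = a ^ 2 / (2 * (a + 1)) := by
  rw [sqrt_eq_iff_mul_self_eq_of_pos ha, eq_div_iff (by positivity)]
  constructor <;> intro h <;> linarith

/-- For `a > 0`, `λ > 0`, with `t₁* = (3/2^{2/3})(λ a (a+1))^{1/3} - a` and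
`t₃* = √(2λ(a+1)) - a/2`, we have `t₁* ≤ t₃*`, with equality iff
`λ = a²/(2(a+1))`. -/
theorem t1_le_t3 (a lam : ℝ) (ha : 0 < a) (hlam : 0 < lam) :
    (3 / (2 : ℝ) ^ ((2 : ℝ) / 3)) * (lam * a * (a + 1)) ^ ((1 : ℝ) / 3) - a ≤
        Real.sqrt (2 * lam * (a + 1)) - a / 2 ∧
      ((3 / (2 : ℝ) ^ ((2 : ℝ) / 3)) * (lam * a * (a + 1)) ^ ((1 : ℝ) / 3) - a =
          Real.sqrt (2 * lam * (a + 1)) - a / 2 ↔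
        lam = a ^ 2 / (2 * (a + 1))) := by
  set s := √(2 * lam * (a + 1))
  have hs : 0 ≤ s := sqrt_nonneg _
  have hprod : lam * a * (a + 1) = s ^ 2 * a / 2 := by
    rw [sq_sqrt (by positivity)]
    ring
  rw [hprod, three_div_two_rpow_two_thirds_mul_rpow_one_third hs ha.le,
    ← sqrt_two_mul_mul_add_one_eq_self_iff ha]
  have hw : (2 : ℝ) / 3 + 1 / 3 = 1 := by norm_num
  have amgm := geom_mean_le_arith_mean2_weighted (by norm_num) (by norm_num) hs ha.le hw
  have amgm_eq := geom_mean_eq_arith_mean2_weighted_iff_of_pos (by norm_num) (by norm_num) hs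
    ha.le hw
  refine ⟨by linarith, ?_⟩
  rw [← amgm_eq]
  constructor <;> intro h <;> linarith
end

section
/- Let a > 0, λ > 0 and x > t₁* := (3/2^{2/3})(λ a(a+1))^{1/3} − a. Define φ(x) = arccos(1 − 27λa(a+1)/(2(a+x)³)) and g(x) = (2/3)(a+x)cos(φ(x)/3) − 2a/3 + x/3. Then y = g(x) satisfies the equation y(a+y)² − x(a+y)² + λa(a+1) = 0. -/
lemma g_is_root_aux (a x L c : ℝ) (hs : a + x ≠ 0)
    (h : 4 * c ^ 3 - 3 * c = 1 - 27 * L / (2 * (a + x) ^ 3)) :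
    ((2 / 3) * (a + x) * c - 2 * a / 3 + x / 3) *
        (a + ((2 / 3) * (a + x) * c - 2 * a / 3 + x / 3)) ^ 2
      - x * (a + ((2 / 3) * (a + x) * c - 2 * a / 3 + x / 3)) ^ 2 + L = 0 := by
  have h3 : (2 : ℝ) * (a + x) ^ 3 ≠ 0 := by
    simp [pow_ne_zero, hs]
  field_simp at h
  linear_combination h / 27

/-- For `a > 0`, `λ > 0`, `x > t₁*`, the value
`g(x) = (2/3)(a+x) cos(φ(x)/3) − 2a/3 + x/3`, with
`φ(x) = arccos(1 − 27λa(a+1)/(2(a+x)³))`, satisfies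
`y(a+y)² − x(a+y)² + λa(a+1) = 0` at `y = g(x)`. -/
theorem g_is_root (a lam x : ℝ) (ha : 0 < a) (hlam : 0 < lam)
    (hx : (3 / (2 : ℝ) ^ ((2 : ℝ) / 3)) * (lam * a * (a + 1)) ^ ((1 : ℝ) / 3) - a < x) :
    let φ := Real.arccos (1 - 27 * lam * a * (a + 1) / (2 * (a + x) ^ 3))
    let y := (2 / 3) * (a + x) * Real.cos (φ / 3) - 2 * a / 3 + x / 3
    y * (a + y) ^ 2 - x * (a + y) ^ 2 + lam * a * (a + 1) = 0 := by
  have hLpos : 0 < lam * a * (a + 1) := by positivity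
  have h2 : (0 : ℝ) < (2 : ℝ) ^ ((2 : ℝ) / 3) := by positivity
  have h1 : 0 < (lam * a * (a + 1)) ^ ((1 : ℝ) / 3) :=
    Real.rpow_pos_of_pos hLpos _
  have hs : 0 < a + x := by
    have : 0 < 3 / (2 : ℝ) ^ ((2 : ℝ) / 3) * (lam * a * (a + 1)) ^ ((1 : ℝ) / 3) := by
      positivity
    linarith
  -- cube the hypothesis
  have hcube : 27 * (lam * a * (a + 1)) < 4 * (a + x) ^ 3 := by
    have hlt : 3 / (2 : ℝ) ^ ((2 : ℝ) / 3) * (lam * a * (a + 1)) ^ ((1 : ℝ) / 3) < a + x := by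
      linarith
    have hp : (3 / (2 : ℝ) ^ ((2 : ℝ) / 3) * (lam * a * (a + 1)) ^ ((1 : ℝ) / 3)) ^ 3
        < (a + x) ^ 3 := by
      apply pow_lt_pow_left₀ hlt (by positivity)
      norm_num
    have e1 : ((2 : ℝ) ^ ((2 : ℝ) / 3)) ^ 3 = 4 := by
      rw [← Real.rpow_natCast ((2 : ℝ) ^ ((2 : ℝ) / 3)) 3, ← Real.rpow_mul (by norm_num)]
      norm_num
    have e2 : ((lam * a * (a + 1)) ^ ((1 : ℝ) / 3)) ^ 3 = lam * a * (a + 1) := by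
      rw [← Real.rpow_natCast ((lam * a * (a + 1)) ^ ((1 : ℝ) / 3)) 3,
        ← Real.rpow_mul hLpos.le]
      norm_num
    rw [mul_pow, div_pow, e1, e2] at hp
    nlinarith [h2]
  have hden : (0 : ℝ) < 2 * (a + x) ^ 3 := by positivity
  have hb1 : -1 ≤ 1 - 27 * lam * a * (a + 1) / (2 * (a + x) ^ 3) := by
    have hq : 27 * lam * a * (a + 1) / (2 * (a + x) ^ 3) ≤ 2 := by
      rw [div_le_iff₀ hden]
      nlinarith
    linarith
  have hb2 : 1 - 27 * lam * a * (a + 1) / (2 * (a + x) ^ 3) ≤ 1 := by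
    have : 0 ≤ 27 * lam * a * (a + 1) / (2 * (a + x) ^ 3) := by positivity
    linarith
  set t := 1 - 27 * lam * a * (a + 1) / (2 * (a + x) ^ 3) with ht
  have hcos : Real.cos (Real.arccos t) = t := Real.cos_arccos hb1 hb2
  have htriple := Real.cos_three_mul (Real.arccos t / 3)
  have h3 : 3 * (Real.arccos t / 3) = Real.arccos t := by ring
  rw [h3, hcos] at htriple
  intro φ y
  exact g_is_root_aux a x (lam * a * (a + 1)) (Real.cos (Real.arccos t / 3)) hs.ne'
    (by rw [← htriple, ht]; ring)
end

section
/- Let a > 0, λ > 0 and x > t₁* := (3/2^{2/3})(λ a(a+1))^{1/3} − a. With g as above, g(x) ≤ x and g(x) is the largest real root of the cubic y(a+y)² − x(a+y)² + λa(a+1) = 0. -/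
set_option maxHeartbeats 800000 in
/-- For `a > 0`, `λ > 0`, `x > t₁*`, `g(x) ≤ x` and `g(x)` is the largest real
root of the cubic `y(a+y)² − x(a+y)² + λa(a+1) = 0`. -/
theorem g_largest_root (a lam x : ℝ) (ha : 0 < a) (hlam : 0 < lam)
    (hx : (3 / (2 : ℝ) ^ ((2 : ℝ) / 3)) * (lam * a * (a + 1)) ^ ((1 : ℝ) / 3) - a < x) :
    let φ := Real.arccos (1 - 27 * lam * a * (a + 1) / (2 * (a + x) ^ 3))
    let g := (2 / 3) * (a + x) * Real.cos (φ / 3) - 2 * a / 3 + x / 3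
    g ≤ x ∧ g * (a + g) ^ 2 - x * (a + g) ^ 2 + lam * a * (a + 1) = 0 ∧
      ∀ y : ℝ, y * (a + y) ^ 2 - x * (a + y) ^ 2 + lam * a * (a + 1) = 0 → y ≤ g := by
  intro φ g
  have hφdef : φ = Real.arccos (1 - 27 * lam * a * (a + 1) / (2 * (a + x) ^ 3)) := rfl
  have hgdef : g = (2 / 3) * (a + x) * Real.cos (φ / 3) - 2 * a / 3 + x / 3 := rfl
  clear_value φ g
  set c : ℝ := lam * a * (a + 1) with hcdef
  clear_value c
  have hc0 : 0 < c := by rw [hcdef]; positivity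
  -- bound on s := a + x
  have ht0 : 0 < (3 / (2 : ℝ) ^ ((2 : ℝ) / 3)) * c ^ ((1 : ℝ) / 3) := by positivity
  have ht : (3 / (2 : ℝ) ^ ((2 : ℝ) / 3)) * c ^ ((1 : ℝ) / 3) < a + x := by linarith
  have hs0 : (0 : ℝ) < a + x := lt_trans ht0 ht
  have hcube : 27 / 4 * c < (a + x) ^ 3 := by
    have e1 : ((2 : ℝ) ^ ((2 : ℝ) / 3)) ^ (3 : ℕ) = 4 := by
      rw [← Real.rpow_natCast ((2 : ℝ) ^ ((2 : ℝ) / 3)) 3, ← Real.rpow_mul (by norm_num)]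
      norm_num
    have e2 : (c ^ ((1 : ℝ) / 3)) ^ (3 : ℕ) = c := by
      rw [← Real.rpow_natCast (c ^ ((1 : ℝ) / 3)) 3, ← Real.rpow_mul hc0.le]
      norm_num
    have e3 : ((3 / (2 : ℝ) ^ ((2 : ℝ) / 3)) * c ^ ((1 : ℝ) / 3)) ^ (3 : ℕ) = 27 / 4 * c := by
      rw [mul_pow, div_pow, e1, e2]; norm_num
    calc 27 / 4 * c = ((3 / (2 : ℝ) ^ ((2 : ℝ) / 3)) * c ^ ((1 : ℝ) / 3)) ^ (3 : ℕ) := e3.symm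
      _ < (a + x) ^ 3 := by
          exact pow_lt_pow_left₀ ht ht0.le (by norm_num)
  -- arccos argument bounds
  have hA1 : (-1 : ℝ) < 1 - 27 * c / (2 * (a + x) ^ 3) := by
    have h1 : 27 * c / (2 * (a + x) ^ 3) < 2 := by
      rw [div_lt_iff₀ (by positivity)]; nlinarith
    linarith
  have hA2 : 1 - 27 * c / (2 * (a + x) ^ 3) < 1 := by
    have : 0 < 27 * c / (2 * (a + x) ^ 3) := by positivity
    linarith
  have hAeq : 1 - 27 * lam * a * (a + 1) / (2 * (a + x) ^ 3)
      = 1 - 27 * c / (2 * (a + x) ^ 3) := by rw [hcdef]; ring_nf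
  rw [hAeq] at hφdef
  have hφ0 : 0 ≤ φ := hφdef ▸ Real.arccos_nonneg _
  have hφπ : φ < Real.pi := by
    rw [hφdef]
    refine lt_of_le_of_ne (Real.arccos_le_pi _) ?_
    rw [Ne, Real.arccos_eq_pi]
    linarith
  set u : ℝ := Real.cos (φ / 3) with hudef
  clear_value u
  have hu1 : u ≤ 1 := hudef ▸ Real.cos_le_one _
  have hu2 : (1 : ℝ) / 2 < u := by
    have h := Real.cos_lt_cos_of_nonneg_of_le_pi (by linarith : (0:ℝ) ≤ φ / 3)
      (by linarith [Real.pi_pos] : Real.pi / 3 ≤ Real.pi) (by linarith : φ / 3 < Real.pi / 3)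
    rw [Real.cos_pi_div_three] at h
    rw [hudef]; exact h
  have hcosφ : Real.cos φ = 1 - 27 * c / (2 * (a + x) ^ 3) := by
    rw [hφdef]; exact Real.cos_arccos hA1.le hA2.le
  have hcos3 : Real.cos φ = 4 * u ^ 3 - 3 * u := by
    have h3 : 3 * (φ / 3) = φ := by ring
    have := Real.cos_three_mul (φ / 3)
    rw [h3] at this
    rw [this, hudef]
  have heq : 4 * u ^ 3 - 3 * u = 1 - 27 * c / (2 * (a + x) ^ 3) := by
    rw [← hcos3, hcosφ]
  have hkey : 2 * (a + x) ^ 3 * (4 * u ^ 3 - 3 * u) = 2 * (a + x) ^ 3 - 27 * c := by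
    field_simp at heq
    linarith
  -- g is a root
  have hgroot : g * (a + g) ^ 2 - x * (a + g) ^ 2 + c = 0 := by
    rw [hgdef]
    linear_combination (1 / 27 : ℝ) * hkey
  -- a + g > 2/3 * (a + x)
  have hz0 : 2 / 3 * (a + x) < a + g := by
    rw [hgdef]
    nlinarith [mul_pos hs0 (by linarith : (0:ℝ) < u - 1/2)]
  refine ⟨?_, hgroot, ?_⟩
  · rw [hgdef]
    nlinarith [mul_le_mul_of_nonneg_left hu1 hs0.le]
  · intro y hy
    clear hx ht ht0 hAeq hφdef hudef hcosφ hcos3 heq hkey hA1 hA2 hcube hφ0 hφπ hu1 hu2 hcdef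
    by_contra hcon
    push_neg at hcon
    have hdiff : (y - g) * ((a + y) ^ 2 + (a + y) * (a + g) + (a + g) ^ 2
        - (a + x) * ((a + y) + (a + g))) = 0 := by
      linear_combination hy - hgroot
    have hq : 0 < (a + y) ^ 2 + (a + y) * (a + g) + (a + g) ^ 2
        - (a + x) * ((a + y) + (a + g)) := by
      have h1 : 0 < (a + g) * (3 * (a + g) - 2 * (a + x)) :=
        mul_pos (by linarith) (by linarith)
      have h2 : 0 ≤ ((a + y) - (a + g)) * ((a + y) + 2 * (a + g) - (a + x)) :=
        mul_nonneg (by linarith) (by linarith)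
      nlinarith [h1, h2]
    have := mul_pos (by linarith : (0:ℝ) < y - g) hq
    linarith
end

section
/- Let a > 0 and λ > a²/(2(a+1)). Then t₃* = √(2λ(a+1)) − a/2 > 0, and g(t₃*) = t₃* − a/2, i.e., t₃* is a root of the equation x − g(x) − a/2 = 0, where g(x) = (2/3)(a+x)cos(φ(x)/3) − 2a/3 + x/3 with φ(x) = arccos(1 − 27λa(a+1)/(2(a+x)³)). -/
/-!
Put `s = √(2λ(a+1))`, so that `a + t₃* = s + a/2 =: d` and `27λa(a+1)/(2d³) = 27as²/(4d³)`.
With `c = 1 − 3a/(4d)` the argument of `arccos` is exactly `4c³ − 3c = cos (3 arccos c)`, and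
`λ > a²/(2(a+1))` means `s > a`, i.e. `c ∈ (1/2, 1)`. Then `3 arccos c ∈ [0, π]`, so
`φ(t₃*) = 3 arccos c`, and `g(t₃*) = (2/3)dc − 2a/3 + t₃*/3 = s − a = t₃* − a/2`.
-/

open Real

theorem Real.arccos_four_mul_pow_three_sub_three_mul {c : ℝ} (hc : 1 / 2 ≤ c) (hc₁ : c ≤ 1) :
    arccos (4 * c ^ 3 - 3 * c) = 3 * arccos c := by
  have h_arccos_le : arccos c ≤ π / 3 := by
    calc arccos c ≤ arccos (cos (π / 3)) := by rw [cos_pi_div_three]; exact arccos_le_arccos hc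
      _ = π / 3 := arccos_cos (by positivity) (by linarith [pi_pos])
  rw [← cos_arccos (by linarith) hc₁, ← cos_three_mul, cos_arccos (by linarith) hc₁]
  exact arccos_cos (by linarith [arccos_nonneg c]) (by linarith)

theorem Real.cos_arccos_four_mul_pow_three_sub_three_mul_div_three {c : ℝ} (hc : 1 / 2 ≤ c)
    (hc₁ : c ≤ 1) : cos (arccos (4 * c ^ 3 - 3 * c) / 3) = c := by
  rw [arccos_four_mul_pow_three_sub_three_mul hc hc₁, mul_div_cancel_left₀ _ three_ne_zero,
    cos_arccos (by linarith) hc₁]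

theorem one_sub_div_cube_eq_chebyshev {a d : ℝ} (hd : d ≠ 0) :
    1 - 27 * a * (d - a / 2) ^ 2 / (4 * d ^ 3) =
      4 * (1 - 3 * a / (4 * d)) ^ 3 - 3 * (1 - 3 * a / (4 * d)) := by
  field_simp
  ring

/-- For `a > 0` and `λ > a²/(2(a+1))`, `t₃* = √(2λ(a+1)) − a/2 > 0` and
`g(t₃*) = t₃* − a/2`, i.e. `t₃*` solves `x − g(x) − a/2 = 0`. -/
theorem t3_root_of_w (a lam : ℝ) (ha : 0 < a) (hlam : a ^ 2 / (2 * (a + 1)) < lam) :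
    let t₃ := Real.sqrt (2 * lam * (a + 1)) - a / 2
    let g : ℝ → ℝ := fun x =>
      (2 / 3) * (a + x) *
          Real.cos (Real.arccos (1 - 27 * lam * a * (a + 1) / (2 * (a + x) ^ 3)) / 3) -
        2 * a / 3 + x / 3
    0 < t₃ ∧ g t₃ = t₃ - a / 2 := by
  intro t₃ g
  set s := √(2 * lam * (a + 1))
  have h_sq_lt : a ^ 2 < 2 * lam * (a + 1) := by
    have := (div_lt_iff₀ (by linarith : (0 : ℝ) < 2 * (a + 1))).mp hlam
    linarith
  have hs_sq : s ^ 2 = 2 * lam * (a + 1) := sq_sqrt (by nlinarith)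
  have has : a < s := lt_sqrt_of_sq_lt h_sq_lt
  set d := a + t₃
  have hd : d = s + a / 2 := by ring
  have hd_pos : 0 < d := by linarith
  set c := 1 - 3 * a / (4 * d)
  have hc : 1 / 2 ≤ c := by
    have : 3 * a / (4 * d) ≤ 1 / 2 := by rw [div_le_iff₀ (by positivity)]; linarith
    linarith
  have hc₁ : c ≤ 1 := by linarith [show 0 ≤ 3 * a / (4 * d) by positivity]
  have h_arg : 1 - 27 * lam * a * (a + 1) / (2 * d ^ 3) = 4 * c ^ 3 - 3 * c := by
    rw [← one_sub_div_cube_eq_chebyshev hd_pos.ne', show d - a / 2 = s by linarith, hs_sq]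
    field_simp
    ring
  refine ⟨by linarith, ?_⟩
  change 2 / 3 * d * cos (arccos (1 - 27 * lam * a * (a + 1) / (2 * d ^ 3)) / 3) - 2 * a / 3
    + t₃ / 3 = t₃ - a / 2
  have hdc : d * c = d - 3 * a / 4 := by simp only [c]; field_simp
  rw [h_arg, cos_arccos_four_mul_pow_three_sub_three_mul_div_three hc hc₁]
  linarith
end

section
/- Let a > 0 and λ > a²/(2(a+1)), and set t₃* = √(2λ(a+1)) − a/2. Then cos(φ(t₃*)/3) = (√(2λ(a+1)) − a/4)/(a/2 + √(2λ(a+1))), where φ(x) = arccos(1 − 27λa(a+1)/(2(a+x)³)). -/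
/-- For `a > 0`, `λ > a²/(2(a+1))`, `t₃* = √(2λ(a+1)) − a/2`:
`cos(φ(t₃*)/3) = (√(2λ(a+1)) − a/4)/(a/2 + √(2λ(a+1)))`. -/
theorem cos_phi_third_at_t3 (a lam : ℝ) (ha : 0 < a)
    (hlam : a ^ 2 / (2 * (a + 1)) < lam) :
    let t₃ := Real.sqrt (2 * lam * (a + 1)) - a / 2
    Real.cos (Real.arccos (1 - 27 * lam * a * (a + 1) / (2 * (a + t₃) ^ 3)) / 3) =
      (Real.sqrt (2 * lam * (a + 1)) - a / 4) / (a / 2 + Real.sqrt (2 * lam * (a + 1))) := by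
  intro t₃
  set s := Real.sqrt (2 * lam * (a + 1)) with hs
  have ha1 : (0:ℝ) < a + 1 := by linarith
  have hlam' : 0 < 2 * lam * (a + 1) := by
    have h0 : 0 < a ^ 2 / (2 * (a + 1)) := by positivity
    nlinarith
  have hs2 : s ^ 2 = 2 * lam * (a + 1) := Real.sq_sqrt hlam'.le
  have hsnn : 0 ≤ s := Real.sqrt_nonneg _
  have ha2 : a ^ 2 < s ^ 2 := by
    rw [hs2]
    rw [div_lt_iff₀ (by linarith)] at hlam
    linarith
  have hsa : a ≤ s := by nlinarith
  have hd : 0 < a / 2 + s := by linarith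
  set c : ℝ := (s - a / 4) / (a / 2 + s) with hc
  have hc1 : c ≤ 1 := by
    rw [hc, div_le_one hd]; linarith
  have hc2 : 1 / 2 ≤ c := by
    rw [hc, le_div_iff₀ hd]; linarith
  have hθle : Real.arccos c ≤ Real.pi / 3 := by
    have := Real.strictAntiOn_arccos.antitoneOn (a := 1/2) (b := c)
      ⟨by norm_num, by norm_num⟩ ⟨by linarith, hc1⟩ hc2
    calc Real.arccos c ≤ Real.arccos (1/2) := this
      _ = Real.pi / 3 := by
        rw [← Real.cos_pi_div_three, Real.arccos_cos (by positivity)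
          (by linarith [Real.pi_pos])]
  have hθnn : 0 ≤ Real.arccos c := Real.arccos_nonneg c
  have ht3 : a + t₃ = a / 2 + s := by simp [t₃]; ring
  have hy : 1 - 27 * lam * a * (a + 1) / (2 * (a + t₃) ^ 3)
      = 4 * c ^ 3 - 3 * c := by
    have hlam2 : 27 * lam * a * (a + 1) = 27 * a * s ^ 2 / 2 := by
      linear_combination (-27 * a / 2) * hs2
    rw [ht3, hc, hlam2]
    have hdne : (a / 2 + s) ≠ 0 := hd.ne'
    field_simp
    ring
  have hcosθ : Real.cos (Real.arccos c) = c :=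
    Real.cos_arccos (by linarith) hc1
  have h3 : 1 - 27 * lam * a * (a + 1) / (2 * (a + t₃) ^ 3)
      = Real.cos (3 * Real.arccos c) := by
    rw [Real.cos_three_mul, hcosθ, hy]
  rw [h3, Real.arccos_cos (by linarith) (by linarith [Real.pi_pos])]
  rw [mul_div_cancel_left₀ _ (by norm_num : (3:ℝ) ≠ 0), hcosθ]
end

section
/- Let a > 0 and 0 < λ < a²/(2(a+1)). Let d = 1 − 27λa(a+1)/(2(a + λ(a+1)/a)³). Then t* = (a − λ(a+1)/(2a))/(a + λ(a+1)/a) lies in (1/2, 1) and satisfies 4(t*)³ − 3t* = d. -/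
/-!
Everything depends on `a` and `λ` only through `s = λ(a+1)/a²`: then `t* = (2 - s)/(2(1 + s))`
and `d = 1 - 27s/(2(1 + s)³)`, and the hypothesis on `λ` says `0 < s < 1/2`, which is exactly
`t* ∈ (1/2, 1)`. The cubic identity comes from `4t³ - 3t - 1 = (t - 1)(2t + 1)²`, where
`t* - 1 = -3s/(2(1 + s))` and `2t* + 1 = 3/(1 + s)`.
-/

open Set

theorem four_mul_pow_three_sub_three_mul_sub_one {R : Type*} [CommRing R] (t : R) :
    4 * t ^ 3 - 3 * t - 1 = (t - 1) * (2 * t + 1) ^ 2 := by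
  ring

theorem four_mul_pow_three_sub_three_mul_of_eq_div {s t : ℝ} (hs : 1 + s ≠ 0)
    (ht : t = (2 - s) / (2 * (1 + s))) :
    4 * t ^ 3 - 3 * t = 1 - 27 * s / (2 * (1 + s) ^ 3) := by
  have h_sub_one : t - 1 = -(3 * s) / (2 * (1 + s)) := by
    rw [ht]; field_simp; ring
  have h_two_mul_add_one : 2 * t + 1 = 3 / (1 + s) := by
    rw [ht]; field_simp; ring
  calc 4 * t ^ 3 - 3 * t = 1 + (t - 1) * (2 * t + 1) ^ 2 := by
        linear_combination four_mul_pow_three_sub_three_mul_sub_one t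
    _ = 1 + -(3 * s) / (2 * (1 + s)) * (3 / (1 + s)) ^ 2 := by
        rw [h_sub_one, h_two_mul_add_one]
    _ = 1 - 27 * s / (2 * (1 + s) ^ 3) := by
        field_simp; ring

theorem div_mem_Ioo_half_one {s : ℝ} (hs₀ : 0 < s) (hs₁ : s < 1 / 2) :
    (2 - s) / (2 * (1 + s)) ∈ Ioo (1 / 2 : ℝ) 1 := by
  have hden : (0 : ℝ) < 2 * (1 + s) := by linarith
  rw [mem_Ioo, lt_div_iff₀ hden, div_lt_one hden]
  constructor <;> linarith

/-- For `a > 0` and `0 < λ < a²/(2(a+1))`, with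
`d = 1 − 27λa(a+1)/(2(a + λ(a+1)/a)³)`, the number
`t* = (a − λ(a+1)/(2a))/(a + λ(a+1)/a)` lies in `(1/2, 1)` and satisfies
`4(t*)³ − 3t* = d`. -/
theorem tstar_in_interval_and_root (a lam : ℝ) (ha : 0 < a) (hlam : 0 < lam)
    (hsub : lam < a ^ 2 / (2 * (a + 1))) :
    let d := 1 - 27 * lam * a * (a + 1) / (2 * (a + lam * (a + 1) / a) ^ 3)
    let t := (a - lam * (a + 1) / (2 * a)) / (a + lam * (a + 1) / a)
    t ∈ Set.Ioo (1 / 2 : ℝ) 1 ∧ 4 * t ^ 3 - 3 * t = d := by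
  intro d t
  set s := lam * (a + 1) / a ^ 2 with hs
  have hs₀ : 0 < s := by positivity
  have hs₁ : s < 1 / 2 := by
    have := (lt_div_iff₀ (by positivity : (0 : ℝ) < 2 * (a + 1))).mp hsub
    rw [hs, div_lt_iff₀ (by positivity)]
    linarith
  have ht : t = (2 - s) / (2 * (1 + s)) := by
    simp only [t, hs]; field_simp
  have hd : d = 1 - 27 * s / (2 * (1 + s) ^ 3) := by
    simp only [d, hs]; field_simp
  refine ⟨ht ▸ div_mem_Ioo_half_one hs₀ hs₁, ?_⟩
  rw [hd]
  exact four_mul_pow_three_sub_three_mul_of_eq_div (by linarith) ht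
end

section
/- Let a > 0 and 0 < λ ≤ a²/(2(a+1)). Then g(t₂*) = 0 where t₂* = λ(a+1)/a, φ(x) = arccos(1 − 27λa(a+1)/(2(a+x)³)), and g(x) = (2/3)(a+x)cos(φ(x)/3) − 2a/3 + x/3. Hence the TL1 thresholding function x ↦ 0 for |x| ≤ t₂*, x ↦ sgn(x)g(|x|) for |x| > t₂* is continuous on ℝ. -/
/-- For `a > 0` and `0 < λ ≤ a²/(2(a+1))`: `g(t₂*) = 0` where `t₂* = λ(a+1)/a`,
and the TL1 thresholding function (`0` for `|x| ≤ t₂*`, `sgn(x) g(|x|)` for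
`|x| > t₂*`) is continuous on `ℝ`. -/
theorem tl1_threshold_continuous (a lam : ℝ) (ha : 0 < a) (hlam : 0 < lam)
    (hsub : lam ≤ a ^ 2 / (2 * (a + 1))) :
    let g : ℝ → ℝ := fun x =>
      (2 / 3) * (a + x) *
          Real.cos (Real.arccos (1 - 27 * lam * a * (a + 1) / (2 * (a + x) ^ 3)) / 3) -
        2 * a / 3 + x / 3
    let t₂ := lam * (a + 1) / a
    g t₂ = 0 ∧ Continuous (fun x : ℝ => if |x| ≤ t₂ then 0 else Real.sign x * g |x|) := by
  intro g t₂
  have ht2 : t₂ = lam * (a + 1) / a := rfl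
  have ha1 : (0:ℝ) < a + 1 := by linarith
  have ht2pos : 0 < t₂ := by rw [ht2]; positivity
  have ht2le : 2 * t₂ ≤ a := by
    have h1 : lam * (2 * (a + 1)) ≤ a ^ 2 := by
      rw [le_div_iff₀ (by positivity)] at hsub; exact hsub
    rw [ht2, show 2 * (lam * (a + 1) / a) = 2 * (lam * (a + 1)) / a by ring,
      div_le_iff₀ ha]
    nlinarith
  have hat : 0 < a + t₂ := by linarith
  set c : ℝ := (2 * a - t₂) / (2 * (a + t₂)) with hc
  have hc_half : 1 / 2 ≤ c := by
    rw [hc, le_div_iff₀ (by positivity)]; linarith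
  have hc_one : c ≤ 1 := by
    rw [hc, div_le_one (by positivity)]; linarith
  have hc_neg : (-1 : ℝ) ≤ c := by linarith
  have harc_nonneg : 0 ≤ Real.arccos c := Real.arccos_nonneg c
  have harc_le : Real.arccos c ≤ Real.pi / 3 := by
    have h1 : Real.arcsin (1 / 2) ≤ Real.arcsin c := Real.monotone_arcsin hc_half
    have h2 : Real.arccos (1 / 2) = Real.pi / 3 := by
      rw [← Real.cos_pi_div_three, Real.arccos_cos (by positivity)
        (by linarith [Real.pi_pos])]
    have h3 : Real.arccos c ≤ Real.arccos (1 / 2) := by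
      rw [Real.arccos, Real.arccos]; linarith
    linarith
  have hlam_eq : lam = t₂ * a / (a + 1) := by
    rw [ht2]; field_simp
  have hval : 1 - 27 * lam * a * (a + 1) / (2 * (a + t₂) ^ 3)
      = Real.cos (3 * Real.arccos c) := by
    rw [Real.cos_three_mul, Real.cos_arccos hc_neg hc_one, hc, hlam_eq]
    field_simp
    ring
  have harccos3 : Real.arccos (Real.cos (3 * Real.arccos c)) = 3 * Real.arccos c :=
    Real.arccos_cos (by linarith) (by linarith)
  have hg0 : g t₂ = 0 := by
    show (2 / 3) * (a + t₂) *
        Real.cos (Real.arccos (1 - 27 * lam * a * (a + 1) / (2 * (a + t₂) ^ 3)) / 3) -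
      2 * a / 3 + t₂ / 3 = 0
    rw [hval, harccos3, show (3 * Real.arccos c) / 3 = Real.arccos c by ring,
      Real.cos_arccos hc_neg hc_one, hc]
    field_simp
    ring
  refine ⟨hg0, ?_⟩
  -- rewrite the function without the `if`
  have hfe : (fun x : ℝ => if |x| ≤ t₂ then 0 else Real.sign x * g |x|)
      = fun x : ℝ => Real.sign x * g (max t₂ |x|) := by
    funext x
    split_ifs with h
    · rw [max_eq_left h, hg0, mul_zero]
    · rw [max_eq_right (le_of_lt (not_le.mp h))]
  rw [hfe]
  -- continuity of G := g ∘ (max t₂ |·|)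
  have hm : Continuous (fun x : ℝ => max t₂ |x|) := continuous_const.max continuous_abs
  have hden : ∀ x : ℝ, 2 * (a + max t₂ |x|) ^ 3 ≠ 0 := by
    intro x
    have h1 : t₂ ≤ max t₂ |x| := le_max_left _ _
    have : 0 < a + max t₂ |x| := by linarith
    positivity
  have hG : Continuous (fun x : ℝ => g (max t₂ |x|)) := by
    have hrw : (fun x : ℝ => g (max t₂ |x|)) = fun x : ℝ =>
        (2 / 3) * (a + max t₂ |x|) *
            Real.cos (Real.arccos
              (1 - 27 * lam * a * (a + 1) / (2 * (a + max t₂ |x|) ^ 3)) / 3) -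
          2 * a / 3 + (max t₂ |x|) / 3 := rfl
    rw [hrw]
    have hinner : Continuous (fun x : ℝ =>
        1 - 27 * lam * a * (a + 1) / (2 * (a + max t₂ |x|) ^ 3)) :=
      continuous_const.sub (continuous_const.div
        (continuous_const.mul ((continuous_const.add hm).pow 3)) hden)
    exact (((continuous_const.mul (continuous_const.add hm)).mul
      (Real.continuous_cos.comp ((Real.continuous_arccos.comp hinner).div_const 3))).sub
      continuous_const).add (hm.div_const 3)
  have hG0 : g (max t₂ |(0:ℝ)|) = 0 := by
    rw [abs_zero, max_eq_left (le_of_lt ht2pos), hg0]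
  -- continuity of x ↦ sign x * G x
  rw [continuous_iff_continuousAt]
  intro x₀
  rcases lt_trichotomy x₀ 0 with h | h | h
  · refine (hG.continuousAt.neg).congr ?_
    have hmem : Set.Iio (0:ℝ) ∈ nhds x₀ := isOpen_Iio.mem_nhds h
    exact Filter.eventually_of_mem hmem fun y hy => by
      simp [Real.sign_of_neg hy]
  · subst h
    unfold ContinuousAt
    have hF0 : (fun x : ℝ => Real.sign x * g (max t₂ |x|)) 0 = 0 := by
      simp [Real.sign_zero]
    rw [hF0]
    apply squeeze_zero_norm (a := fun x : ℝ => |g (max t₂ |x|)|)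
    · intro x
      have hs : |Real.sign x| ≤ 1 := by
        rcases lt_trichotomy x 0 with hx | hx | hx
        · simp [Real.sign_of_neg hx]
        · simp [hx]
        · simp [Real.sign_of_pos hx]
      calc ‖Real.sign x * g (max t₂ |x|)‖ = |Real.sign x| * |g (max t₂ |x|)| :=
            abs_mul _ _
        _ ≤ 1 * |g (max t₂ |x|)| := by
            exact mul_le_mul_of_nonneg_right hs (abs_nonneg _)
        _ = |g (max t₂ |x|)| := one_mul _
    · have h0 : ((fun x : ℝ => |g (max t₂ |x|)|) 0) = 0 := by
        show |g (max t₂ |(0:ℝ)|)| = 0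
        rw [hG0, abs_zero]
      have := (hG.abs.continuousAt (x := (0:ℝ)))
      unfold ContinuousAt at this
      rwa [h0] at this
  · refine hG.continuousAt.congr ?_
    have hmem : Set.Ioi (0:ℝ) ∈ nhds x₀ := isOpen_Ioi.mem_nhds h
    exact Filter.eventually_of_mem hmem fun y hy => by
      simp [Real.sign_of_pos hy]
end

section
/- Let a > 0, λ > 0, x > 0, and suppose λ ≤ a²/(2(a+1)). Define f(y) = (1/2)(y − x)² + λ(a+1)y/(a+y) for y ≥ 0. Then f''(y) = 1 − 2λa(a+1)/(a+y)³ is nonnegative for all y ≥ 0, so f is convex on [0,∞), and f'(0) = λ(a+1)/a − x; consequently if 0 ≤ x ≤ λ(a+1)/a then y = 0 is the minimizer of f on [0,∞). -/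
/-!
The second derivative of `f` is `1 - 2λa(a+1)/(a+y)³`, and the bound on `λ` gives
`2λa(a+1) ≤ a³ ≤ (a+y)³` for `y ≥ 0`, so `f` is convex on `[0,∞)`. A convex function whose
derivative at the left endpoint `0` is nonnegative is minimised there, and `f'(0) = λ(a+1)/a - x`.
-/

open Set

lemma ConvexOn.le_of_hasDerivAt_nonneg {S : Set ℝ} {f : ℝ → ℝ} {x y f' : ℝ}
    (hf : ConvexOn ℝ S f) (hx : x ∈ S) (hy : y ∈ S) (hxy : x ≤ y) (hf' : HasDerivAt f f' x)
    (hf'₀ : 0 ≤ f') : f x ≤ f y := by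
  rcases hxy.eq_or_lt with rfl | hlt
  · exact le_rfl
  have hslope : 0 ≤ slope f x y := hf'₀.trans (hf.le_slope_of_hasDerivAt hx hy hlt hf')
  rw [slope_def_field, div_nonneg_iff] at hslope
  rcases hslope with ⟨hnum, -⟩ | ⟨-, hden⟩
  · linarith
  · linarith

/-- The transformed-L1 penalty `(a+1)|y|/(a+|y|)`, written for `y ≥ 0`. -/
noncomputable def tl1Penalty (a y : ℝ) : ℝ := (a + 1) * y / (a + y)

/-- `y ↦ ½ (y - x)² + λ ρₐ(y)`, whose minimiser over `[0,∞)` is the TL1 proximal map at `x`. -/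
noncomputable def tl1Objective (a lam x y : ℝ) : ℝ := 1 / 2 * (y - x) ^ 2 + lam * tl1Penalty a y

noncomputable def tl1ObjectiveDeriv (a lam x y : ℝ) : ℝ := y - x + lam * ((a + 1) * a / (a + y) ^ 2)

section Derivatives

variable {a lam x y : ℝ}

lemma hasDerivAt_tl1Penalty (h : a + y ≠ 0) :
    HasDerivAt (tl1Penalty a) ((a + 1) * a / (a + y) ^ 2) y := by
  have hnum : HasDerivAt (fun y : ℝ => (a + 1) * y) (a + 1) y := by
    simpa using (hasDerivAt_id y).const_mul (a + 1)
  have hden : HasDerivAt (fun y : ℝ => a + y) 1 y := by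
    simpa using (hasDerivAt_id y).const_add a
  refine (hnum.div hden h).congr_deriv ?_
  ring

lemma hasDerivAt_const_div_add_sq (c : ℝ) (h : a + y ≠ 0) :
    HasDerivAt (fun y : ℝ => c / (a + y) ^ 2) (-(2 * c / (a + y) ^ 3)) y := by
  have hden : HasDerivAt (fun y : ℝ => (a + y) ^ 2) (2 * (a + y)) y := by
    refine (((hasDerivAt_id y).const_add a).pow 2).congr_deriv ?_
    simp only [id_eq]
    ring
  refine ((hasDerivAt_const y c).div hden (pow_ne_zero 2 h)).congr_deriv ?_
  field_simp
  ring

lemma hasDerivAt_tl1Objective (h : a + y ≠ 0) :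
    HasDerivAt (tl1Objective a lam x) (tl1ObjectiveDeriv a lam x y) y := by
  have hsq : HasDerivAt (fun y : ℝ => 1 / 2 * (y - x) ^ 2) (y - x) y := by
    refine ((((hasDerivAt_id y).sub_const x).pow 2).const_mul (1 / 2 : ℝ)).congr_deriv ?_
    simp only [id_eq]
    ring
  exact hsq.add ((hasDerivAt_tl1Penalty h).const_mul lam)

lemma hasDerivAt_tl1ObjectiveDeriv (h : a + y ≠ 0) :
    HasDerivAt (tl1ObjectiveDeriv a lam x) (1 - 2 * lam * a * (a + 1) / (a + y) ^ 3) y := by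
  refine (((hasDerivAt_id y).sub_const x).add
    ((hasDerivAt_const_div_add_sq ((a + 1) * a) h).const_mul lam)).congr_deriv ?_
  ring

lemma tl1ObjectiveDeriv_zero (ha : a ≠ 0) :
    tl1ObjectiveDeriv a lam x 0 = lam * (a + 1) / a - x := by
  simp only [tl1ObjectiveDeriv, add_zero]
  field_simp
  ring

end Derivatives

section Convexity

variable {a lam : ℝ} (ha : 0 < a) (hsub : lam ≤ a ^ 2 / (2 * (a + 1)))
include ha hsub

lemma tl1Objective_deriv2_nonneg {y : ℝ} (hy : 0 ≤ y) :
    0 ≤ 1 - 2 * lam * a * (a + 1) / (a + y) ^ 3 := by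
  have hlam : lam * (2 * (a + 1)) ≤ a ^ 2 := (le_div_iff₀ (by positivity)).mp hsub
  have hcube : a ^ 3 ≤ (a + y) ^ 3 := pow_le_pow_left₀ ha.le (by linarith) 3
  rw [sub_nonneg, div_le_one (by positivity)]
  nlinarith [mul_le_mul_of_nonneg_left hlam ha.le]

lemma convexOn_tl1Objective (x : ℝ) : ConvexOn ℝ (Ici 0) (tl1Objective a lam x) := by
  have hne : ∀ y ∈ Ici (0 : ℝ), a + y ≠ 0 := fun y hy => by
    have : (0 : ℝ) ≤ y := hy
    positivity
  refine convexOn_of_hasDerivWithinAt2_nonneg (convex_Ici 0)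
    (fun y hy => (hasDerivAt_tl1Objective (hne y hy)).continuousAt.continuousWithinAt)
    (fun y hy => (hasDerivAt_tl1Objective (hne y (interior_subset hy))).hasDerivWithinAt)
    (fun y hy => (hasDerivAt_tl1ObjectiveDeriv (hne y (interior_subset hy))).hasDerivWithinAt)
    (fun y hy => tl1Objective_deriv2_nonneg ha hsub (interior_subset hy))

end Convexity

theorem tl1_subcritical_convex_min_general (a lam x : ℝ) (ha : 0 < a)
    (hsub : lam ≤ a ^ 2 / (2 * (a + 1))) :
    (∀ y : ℝ, 0 ≤ y → 0 ≤ 1 - 2 * lam * a * (a + 1) / (a + y) ^ 3) ∧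
      ConvexOn ℝ (Set.Ici 0)
        (fun y : ℝ => (1 / 2) * (y - x) ^ 2 + lam * ((a + 1) * y / (a + y))) ∧
      HasDerivAt (fun y : ℝ => (1 / 2) * (y - x) ^ 2 + lam * ((a + 1) * y / (a + y)))
        (lam * (a + 1) / a - x) 0 ∧
      (x ≤ lam * (a + 1) / a → ∀ y : ℝ, 0 ≤ y →
        (1 / 2) * ((0 : ℝ) - x) ^ 2 + lam * ((a + 1) * 0 / (a + 0)) ≤
          (1 / 2) * (y - x) ^ 2 + lam * ((a + 1) * y / (a + y))) := by
  have hderiv₀ : HasDerivAt (tl1Objective a lam x) (lam * (a + 1) / a - x) 0 :=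
    tl1ObjectiveDeriv_zero (lam := lam) (x := x) ha.ne' ▸
      hasDerivAt_tl1Objective (by simpa using ha.ne')
  refine ⟨fun y hy => tl1Objective_deriv2_nonneg ha hsub hy, convexOn_tl1Objective ha hsub x,
    hderiv₀, fun hxle y hy => ?_⟩
  exact (convexOn_tl1Objective ha hsub x).le_of_hasDerivAt_nonneg self_mem_Ici hy hy hderiv₀
    (sub_nonneg.mpr hxle)

/-- For `a > 0`, `0 < λ ≤ a²/(2(a+1))`, `x > 0`, and
`f(y) = (1/2)(y − x)² + λ(a+1)y/(a+y)` on `[0,∞)`: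
the second derivative `1 − 2λa(a+1)/(a+y)³` is nonnegative for `y ≥ 0`, `f` is
convex on `[0,∞)`, `f'(0) = λ(a+1)/a − x`, and if `x ≤ λ(a+1)/a` then `y = 0`
minimizes `f` on `[0,∞)`. -/
theorem tl1_subcritical_convex_min (a lam x : ℝ) (ha : 0 < a) (hlam : 0 < lam)
    (hsub : lam ≤ a ^ 2 / (2 * (a + 1))) (hx : 0 < x) :
    (∀ y : ℝ, 0 ≤ y → 0 ≤ 1 - 2 * lam * a * (a + 1) / (a + y) ^ 3) ∧
      ConvexOn ℝ (Set.Ici 0)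
        (fun y : ℝ => (1 / 2) * (y - x) ^ 2 + lam * ((a + 1) * y / (a + y))) ∧
      HasDerivAt (fun y : ℝ => (1 / 2) * (y - x) ^ 2 + lam * ((a + 1) * y / (a + y)))
        (lam * (a + 1) / a - x) 0 ∧
      (x ≤ lam * (a + 1) / a → ∀ y : ℝ, 0 ≤ y →
        (1 / 2) * ((0 : ℝ) - x) ^ 2 + lam * ((a + 1) * 0 / (a + 0)) ≤
          (1 / 2) * (y - x) ^ 2 + lam * ((a + 1) * y / (a + y))) :=
  tl1_subcritical_convex_min_general a lam x ha hsub
end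

section
/- Let a > 0, λ > a²/(2(a+1)), and x ≥ 0. The function f'(y) = y − x + λa(a+1)/(a+y)² on [0,∞) attains its minimum at ȳ = (2λa(a+1))^{1/3} − a > 0, and f'(ȳ) = (3/2^{2/3})(λa(a+1))^{1/3} − a − x = t₁* − x. Hence if 0 ≤ x ≤ t₁* then f(y) = (1/2)(y−x)² + λ(a+1)y/(a+y) is nondecreasing on [0,∞) and minimized at y = 0. -/
/-!
Put `c = λa(a+1)` and `s = a + y`, so that `f'(y) = s + c/s² − a − x`. The function
`s ↦ s + c/s²` is minimised on `s > 0` at `u = (2c)^{1/3}`, since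
`(s + c/s²) − (u + c/u²) = (s − u)²(2s + u)/(2s²)` once `u³ = 2c`, and its minimum is
`3u/2 = (3/2^{2/3}) c^{1/3}`. The hypothesis on `λ` says exactly `a³ < 2c`, i.e. `ȳ = u − a > 0`.
If `x ≤ t₁*` then `f' ≥ f'(ȳ) = t₁* − x ≥ 0` on `[0, ∞)`, and `f' = df/dy` there, so `f` is
nondecreasing.
-/

open Real Set

lemma rpow_one_third_pow_three {c : ℝ} (hc : 0 ≤ c) : (c ^ ((1 : ℝ) / 3)) ^ 3 = c := by
  simpa [one_div] using rpow_inv_natCast_pow hc (n := 3) (by norm_num)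

section CubicMinimum

variable {u c : ℝ}

lemma add_div_sq_le_add_div_sq_of_pow_three_eq (hu : 0 < u) (hu3 : u ^ 3 = 2 * c)
    {s : ℝ} (hs : 0 < s) : u + c / u ^ 2 ≤ s + c / s ^ 2 := by
  rw [add_div' _ _ _ (by positivity), add_div' _ _ _ (by positivity),
    div_le_div_iff₀ (by positivity) (by positivity)]
  have key : (s * s ^ 2 + c) * u ^ 2 - (u * u ^ 2 + c) * s ^ 2
      = u ^ 2 * (s - u) ^ 2 * (2 * s + u) / 2 := by
    linear_combination (s ^ 2 / 2 - u ^ 2 / 2) * hu3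
  nlinarith [show 0 ≤ u ^ 2 * (s - u) ^ 2 * (2 * s + u) / 2 by positivity]

lemma add_div_sq_eq_of_pow_three_eq (hu : u ≠ 0) (hu3 : u ^ 3 = 2 * c) :
    u + c / u ^ 2 = 3 * u / 2 := by
  field_simp
  linear_combination -hu3

end CubicMinimum

lemma three_div_two_rpow_mul_rpow {c : ℝ} (hc : 0 ≤ c) :
    3 / (2 : ℝ) ^ ((2 : ℝ) / 3) * c ^ ((1 : ℝ) / 3) = 3 * (2 * c) ^ ((1 : ℝ) / 3) / 2 := by
  have h2 : (2 : ℝ) ^ ((2 : ℝ) / 3) * (2 : ℝ) ^ ((1 : ℝ) / 3) = 2 := by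
    rw [← rpow_add two_pos]; norm_num
  rw [mul_rpow zero_le_two hc]
  field_simp
  linear_combination (-c ^ ((1 : ℝ) / 3)) * h2

lemma hasDerivAt_half_sq_sub_add_mul_div {a lam x y : ℝ} (hy : a + y ≠ 0) :
    HasDerivAt (fun y => (1 / 2) * (y - x) ^ 2 + lam * ((a + 1) * y / (a + y)))
      (y - x + lam * a * (a + 1) / (a + y) ^ 2) y := by
  have hsq : HasDerivAt (fun y : ℝ => (1 / 2) * (y - x) ^ 2) (y - x) y := by
    simpa using (((hasDerivAt_id y).sub_const x).pow 2).const_mul (1 / 2 : ℝ)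
  have hfrac : HasDerivAt (fun y : ℝ => (a + 1) * y / (a + y))
      (((a + 1) * (a + y) - (a + 1) * y * 1) / (a + y) ^ 2) y :=
    ((hasDerivAt_id y).const_mul (a + 1) |>.congr_deriv (mul_one _)).div
      ((hasDerivAt_id y).const_add a) hy
  refine (hsq.add (hfrac.const_mul lam)).congr_deriv ?_
  field_simp
  ring

lemma monotoneOn_Ici_of_hasDerivAt_nonneg {f f' : ℝ → ℝ} {b : ℝ}
    (hf : ∀ y ∈ Ici b, HasDerivAt f (f' y) y) (hf' : ∀ y ∈ Ici b, 0 ≤ f' y) :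
    MonotoneOn f (Ici b) :=
  monotoneOn_of_hasDerivWithinAt_nonneg (convex_Ici b)
    (fun y hy => (hf y hy).continuousAt.continuousWithinAt)
    (fun y hy => (hf y (interior_subset hy)).hasDerivWithinAt)
    (fun y hy => hf' y (interior_subset hy))

theorem tl1_supercritical_small_x_general (a lam x : ℝ) (ha : 0 < a)
    (hlam : a ^ 2 / (2 * (a + 1)) < lam) :
    let ybar := (2 * lam * a * (a + 1)) ^ ((1 : ℝ) / 3) - a
    let t₁ := (3 / (2 : ℝ) ^ ((2 : ℝ) / 3)) * (lam * a * (a + 1)) ^ ((1 : ℝ) / 3) - a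
    let f' : ℝ → ℝ := fun y => y - x + lam * a * (a + 1) / (a + y) ^ 2
    let f : ℝ → ℝ := fun y => (1 / 2) * (y - x) ^ 2 + lam * ((a + 1) * y / (a + y))
    0 < ybar ∧ (∀ y : ℝ, 0 ≤ y → f' ybar ≤ f' y) ∧ f' ybar = t₁ - x ∧
      (x ≤ t₁ → MonotoneOn f (Set.Ici 0) ∧ ∀ y : ℝ, 0 ≤ y → f 0 ≤ f y) := by
  intro ybar t₁ f' f
  have hlam0 : 0 < lam := lt_trans (by positivity) hlam
  have hc : 0 < lam * a * (a + 1) := by positivity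
  set c := lam * a * (a + 1)
  set u := (2 * lam * a * (a + 1)) ^ ((1 : ℝ) / 3)
  have hu : 0 < u := by positivity
  have hu3 : u ^ 3 = 2 * c := by rw [rpow_one_third_pow_three (by positivity)]; ring
  have hshift (y : ℝ) : f' y = (a + y) + c / (a + y) ^ 2 - a - x := by simp only [f', c]; ring
  have hybar : a + ybar = u := by simp only [ybar]; ring
  have hpos : 0 < ybar := by
    have ha3 : a ^ 3 < u ^ 3 := by
      rw [hu3]
      have := (div_lt_iff₀ (by positivity)).1 hlam
      nlinarith
    linarith [lt_of_pow_lt_pow_left₀ 3 hu.le ha3]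
  have hmin (y : ℝ) (hy : 0 ≤ y) : f' ybar ≤ f' y := by
    rw [hshift, hshift, hybar]
    linarith [add_div_sq_le_add_div_sq_of_pow_three_eq hu hu3 (s := a + y) (by linarith)]
  have hval : f' ybar = t₁ - x := by
    rw [hshift, hybar, add_div_sq_eq_of_pow_three_eq hu.ne' hu3]
    simp only [t₁, three_div_two_rpow_mul_rpow hc.le, u, c]
    ring_nf
  refine ⟨hpos, hmin, hval, fun hxt => ?_⟩
  have hmono : MonotoneOn f (Ici 0) :=
    monotoneOn_Ici_of_hasDerivAt_nonneg
      (fun y hy => hasDerivAt_half_sq_sub_add_mul_div (by linarith [mem_Ici.1 hy]))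
      (fun y hy => by linarith [hmin y hy])
  exact ⟨hmono, fun y hy => hmono self_mem_Ici hy hy⟩

/-- For `a > 0`, `λ > a²/(2(a+1))`, `x ≥ 0`: the function
`f'(y) = y − x + λa(a+1)/(a+y)²` on `[0,∞)` attains its minimum at
`ȳ = (2λa(a+1))^{1/3} − a > 0`, with `f'(ȳ) = t₁* − x`; hence if
`0 ≤ x ≤ t₁*` then `f(y) = (1/2)(y−x)² + λ(a+1)y/(a+y)` is nondecreasing on
`[0,∞)` and minimized at `y = 0`. -/
theorem tl1_supercritical_small_x (a lam x : ℝ) (ha : 0 < a)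
    (hlam : a ^ 2 / (2 * (a + 1)) < lam) (hx : 0 ≤ x) :
    let ybar := (2 * lam * a * (a + 1)) ^ ((1 : ℝ) / 3) - a
    let t₁ := (3 / (2 : ℝ) ^ ((2 : ℝ) / 3)) * (lam * a * (a + 1)) ^ ((1 : ℝ) / 3) - a
    let f' : ℝ → ℝ := fun y => y - x + lam * a * (a + 1) / (a + y) ^ 2
    let f : ℝ → ℝ := fun y => (1 / 2) * (y - x) ^ 2 + lam * ((a + 1) * y / (a + y))
    0 < ybar ∧ (∀ y : ℝ, 0 ≤ y → f' ybar ≤ f' y) ∧ f' ybar = t₁ - x ∧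
      (x ≤ t₁ → MonotoneOn f (Set.Ici 0) ∧ ∀ y : ℝ, 0 ≤ y → f 0 ≤ f y) :=
  tl1_supercritical_small_x_general a lam x ha hlam
end

section
/- Let a > 0, λ > 0, x > 0, and let y₀ > 0 satisfy y₀ − x + λa(a+1)/(a+y₀)² = 0. With f(y) = (1/2)(y−x)² + λ(a+1)|y|/(a+|y|), the identity f(y₀) − f(0) = y₀²·((x − y₀)/a − 1/2) holds. -/
/-! Stationarity says `λa(a+1) = (x - y₀)(a + y₀)²`. Substituting this into the penalty term
`λ(a+1)y₀/(a+y₀)` turns `f(y₀) - f(0) = y₀²/2 - x y₀ + λ(a+1)y₀/(a+y₀)` into a polynomial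
identity in `x, y₀` divided by `a`. -/

lemma mul_eq_of_stationary {a lam x y : ℝ} (hay : a + y ≠ 0)
    (hstat : y - x + lam * a * (a + 1) / (a + y) ^ 2 = 0) :
    lam * a * (a + 1) = (x - y) * (a + y) ^ 2 := by
  field_simp at hstat
  linear_combination hstat

lemma penalty_eq_of_stationary {a lam x y : ℝ} (ha : a ≠ 0) (hay : a + y ≠ 0)
    (hstat : y - x + lam * a * (a + 1) / (a + y) ^ 2 = 0) :
    lam * ((a + 1) * y / (a + y)) = (x - y) * (a + y) * y / a := by
  field_simp
  linear_combination y * mul_eq_of_stationary hay hstat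

theorem tl1_value_gap_identity_general (a lam x y₀ : ℝ) (ha : 0 < a)
    (hy₀ : 0 < y₀)
    (hstat : y₀ - x + lam * a * (a + 1) / (a + y₀) ^ 2 = 0) :
    ((1 / 2) * (y₀ - x) ^ 2 + lam * ((a + 1) * |y₀| / (a + |y₀|))) -
        ((1 / 2) * ((0 : ℝ) - x) ^ 2 + lam * ((a + 1) * |(0 : ℝ)| / (a + |(0 : ℝ)|))) =
      y₀ ^ 2 * ((x - y₀) / a - 1 / 2) := by
  rw [abs_of_pos hy₀, abs_zero, penalty_eq_of_stationary ha.ne' (by positivity) hstat]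
  field_simp
  ring

/-- For `a > 0`, `λ > 0`, `x > 0` and a stationary point `y₀ > 0` with
`y₀ − x + λa(a+1)/(a+y₀)² = 0`, with `f(y) = (1/2)(y−x)² + λ(a+1)|y|/(a+|y|)`,
the identity `f(y₀) − f(0) = y₀²((x − y₀)/a − 1/2)` holds. -/
theorem tl1_value_gap_identity (a lam x y₀ : ℝ) (ha : 0 < a) (hlam : 0 < lam)
    (hx : 0 < x) (hy₀ : 0 < y₀)
    (hstat : y₀ - x + lam * a * (a + 1) / (a + y₀) ^ 2 = 0) :
    ((1 / 2) * (y₀ - x) ^ 2 + lam * ((a + 1) * |y₀| / (a + |y₀|))) -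
        ((1 / 2) * ((0 : ℝ) - x) ^ 2 + lam * ((a + 1) * |(0 : ℝ)| / (a + |(0 : ℝ)|))) =
      y₀ ^ 2 * ((x - y₀) / a - 1 / 2) :=
  tl1_value_gap_identity_general a lam x y₀ ha hy₀ hstat
end
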